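/- arXiv:math/0508204 — 8 statements merged into one kernel-verified Lean document; each statement's English description precedes it below -/
import Mathlib

section
/- Let p be an odd prime and Δ ∈ 𝔽_p^* such that −Δ is not a square in 𝔽_p. Let w₁, w₂ ∈ 𝔽_p satisfy Δ·(w₁² − w₂²) = −1. Set W₂ = [[w₁, w₂],[w₂, w₁]] and E₁₁ = diag(1, −1). Then for every symmetric matrix B ∈ M₂(𝔽_p): if det(B·E₁₁·W₂ + W₂·E₁₁·B) = 0, then B·E₁₁·W₂ + W₂·E₁₁·B = 0 and moreover B = γ·[[w₂, w₁],[w₁, w₂]] for some scalar γ ∈ 𝔽_p. -/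
/-!
Write `B = [[a, b], [b, c]]`. The anticommutator `D = B E₁₁ W₂ + W₂ E₁₁ B` has entries
`L + w₁M`, `w₂M`, `w₂M`, `-L + w₁M` with `L = w₁(a + c) - 2bw₂` and `M = a - c`, so
`det D = (w₁² - w₂²) M² - L²`. Since `-Δ (w₁² - w₂²) = 1`, the form `w₁² - w₂²` is a
non-square, hence `det D = 0` forces `L = M = 0`, i.e. `D = 0`. Then `a = c` and
`a w₁ = b w₂`, and `γ = Δ (a w₂ - b w₁)` works because `Δ (w₂² - w₁²) = 1`.
-/

open Matrix

theorem eq_zero_of_sq_eq_mul_sq {K : Type*} [Field K] {t L M : K} (ht : ¬IsSquare t)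
    (h : L ^ 2 = t * M ^ 2) : L = 0 ∧ M = 0 := by
  have hM : M = 0 := by
    by_contra hM
    exact ht ⟨L / M, by field_simp; linear_combination -h⟩
  subst hM
  exact ⟨pow_eq_zero_iff two_ne_zero |>.mp (by simpa using h), rfl⟩

theorem not_isSquare_of_mul_eq_one {K : Type*} [Field K] {s t : K} (hs : ¬IsSquare s)
    (h : s * t = 1) : ¬IsSquare t := by
  rw [eq_inv_of_mul_eq_one_left h, isSquare_inv] at hs
  exact hs

section Anticommutator

variable {R : Type*} [CommRing R] (a b c w₁ w₂ : R)

theorem anticommutator_fin_two :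
    !![a, b; b, c] * !![(1 : R), 0; 0, -1] * !![w₁, w₂; w₂, w₁]
        + !![w₁, w₂; w₂, w₁] * !![(1 : R), 0; 0, -1] * !![a, b; b, c]
      = !![(w₁ * (a + c) - 2 * b * w₂) + w₁ * (a - c), w₂ * (a - c);
           w₂ * (a - c), -(w₁ * (a + c) - 2 * b * w₂) + w₁ * (a - c)] := by
  ext i j
  fin_cases i <;> fin_cases j <;> simp <;> ring

theorem det_anticommutator_fin_two :
    (!![(w₁ * (a + c) - 2 * b * w₂) + w₁ * (a - c), w₂ * (a - c);
        w₂ * (a - c), -(w₁ * (a + c) - 2 * b * w₂) + w₁ * (a - c)]).det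
      = (w₁ ^ 2 - w₂ ^ 2) * (a - c) ^ 2 - (w₁ * (a + c) - 2 * b * w₂) ^ 2 := by
  rw [det_fin_two_of]
  ring

variable {a b w₁ w₂} in
theorem eq_smul_of_mul_eq_mul {Δ : R} (hw : Δ * (w₁ ^ 2 - w₂ ^ 2) = -1)
    (hab : a * w₁ = b * w₂) :
    !![a, b; b, a] = (Δ * (a * w₂ - b * w₁)) • !![w₂, w₁; w₁, w₂] := by
  have ha : Δ * (a * w₂ - b * w₁) * w₂ = a := by linear_combination -a * hw + Δ * w₁ * hab
  have hb : Δ * (a * w₂ - b * w₁) * w₁ = b := by linear_combination -b * hw + Δ * w₂ * hab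
  ext i j
  fin_cases i <;> fin_cases j <;> simp [ha, hb]

end Anticommutator

theorem stmt_4_general {p : ℕ} [Fact p.Prime] (hp : p ≠ 2)
    (Δ : ZMod p) (hns : ¬IsSquare (-Δ))
    (w₁ w₂ : ZMod p) (hw : Δ * (w₁ ^ 2 - w₂ ^ 2) = -1)
    (B : Matrix (Fin 2) (Fin 2) (ZMod p)) (hB : B.IsSymm)
    (h : (B * !![(1 : ZMod p), 0; 0, -1] * !![w₁, w₂; w₂, w₁]
          + !![w₁, w₂; w₂, w₁] * !![(1 : ZMod p), 0; 0, -1] * B).det = 0) :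
    B * !![(1 : ZMod p), 0; 0, -1] * !![w₁, w₂; w₂, w₁]
        + !![w₁, w₂; w₂, w₁] * !![(1 : ZMod p), 0; 0, -1] * B = 0
      ∧ ∃ γ : ZMod p, B = γ • !![w₂, w₁; w₁, w₂] := by
  obtain ⟨a, b, c, rfl⟩ : ∃ a b c, B = !![a, b; b, c] :=
    ⟨B 0 0, B 0 1, B 1 1, (eta_fin_two B).trans (by rw [hB.apply 0 1])⟩
  rw [anticommutator_fin_two] at h ⊢
  rw [det_anticommutator_fin_two] at h
  have ht : ¬IsSquare (w₁ ^ 2 - w₂ ^ 2) :=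
    not_isSquare_of_mul_eq_one hns (by linear_combination -hw)
  obtain ⟨hL, hM⟩ := eq_zero_of_sq_eq_mul_sq (L := w₁ * (a + c) - 2 * b * w₂) (M := a - c) ht
    (by linear_combination -h)
  have h2 : (2 : ZMod p) ≠ 0 := Ring.two_ne_zero (by rwa [ZMod.ringChar_zmod_n])
  have hab : a * w₁ = b * w₂ :=
    mul_left_cancel₀ h2 (by linear_combination hL + w₁ * hM)
  obtain rfl : a = c := sub_eq_zero.mp hM
  refine ⟨?_, _, eq_smul_of_mul_eq_mul hw hab⟩
  rw [hL, hM]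
  simpa using (eta_fin_two (0 : Matrix (Fin 2) (Fin 2) (ZMod p))).symm

/-- Lemma 3.4.3.10: with `Δ(w₁² − w₂²) = −1` and `−Δ` a non-square, if the
symmetric matrix `B` satisfies `det(B·E₁₁·W₂ + W₂·E₁₁·B) = 0` then in fact
`B·E₁₁·W₂ + W₂·E₁₁·B = 0` and `B = γ·[[w₂,w₁],[w₁,w₂]]` for some scalar `γ`. -/
theorem stmt_4 {p : ℕ} [Fact p.Prime] (hp : p ≠ 2)
    (Δ : ZMod p) (hΔ : Δ ≠ 0) (hns : ¬IsSquare (-Δ))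
    (w₁ w₂ : ZMod p) (hw : Δ * (w₁ ^ 2 - w₂ ^ 2) = -1)
    (B : Matrix (Fin 2) (Fin 2) (ZMod p)) (hB : B.IsSymm)
    (h : (B * !![(1 : ZMod p), 0; 0, -1] * !![w₁, w₂; w₂, w₁]
          + !![w₁, w₂; w₂, w₁] * !![(1 : ZMod p), 0; 0, -1] * B).det = 0) :
    B * !![(1 : ZMod p), 0; 0, -1] * !![w₁, w₂; w₂, w₁]
        + !![w₁, w₂; w₂, w₁] * !![(1 : ZMod p), 0; 0, -1] * B = 0
      ∧ ∃ γ : ZMod p, B = γ • !![w₂, w₁; w₁, w₂] :=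
  stmt_4_general hp Δ hns w₁ w₂ hw B hB h
end

section
/- Let K be a field, d ∈ K a non-square, L = K(√d) with conjugation σ (σ(√d) = −√d, applied entrywise to matrices). Let a, b ≥ 1, g = a + b, E = diag(I_a, −I_b). Let A, C ∈ M_{b×a}(K) and U ∈ M_b(K) satisfy C·Aᵗ − A·Cᵗ = U − Uᵗ. Define μ₁ = [[−I_a, −Cᵗ·√d],[A + C·√d, −I_b − U·√d]] ∈ M_g(L). Then the matrix G = μ₁·E·σ(μ₁)ᵗ has all its entries in K. -/
open Matrix

/-- The matrix `μ₁ = [[−I, −Cᵗ√d],[A + C√d, −I − U√d]]` of Section 4.1. -/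
noncomputable def stmt6μ₁ {K L : Type*} [Field K] [Field L] [Algebra K L] (rt : L)
    {a b : ℕ} (A C : Matrix (Fin b) (Fin a) K) (U : Matrix (Fin b) (Fin b) K) :
    Matrix (Fin a ⊕ Fin b) (Fin a ⊕ Fin b) L :=
  Matrix.fromBlocks (-1) (-(rt • (C.transpose.map (algebraMap K L))))
    (A.map (algebraMap K L) + rt • C.map (algebraMap K L))
    (-1 - rt • U.map (algebraMap K L))

/-- `E = diag(I_a, −I_b)`. -/
def stmt6E (a b : ℕ) (L : Type*) [Field L] :
    Matrix (Fin a ⊕ Fin b) (Fin a ⊕ Fin b) L :=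
  Matrix.fromBlocks 1 0 0 (-1)

section
variable {K L : Type*} [Field K] [Field L] [Algebra K L] {m n : Type*}

lemma aux_map_neg (X : Matrix m n K) :
    (-X).map (algebraMap K L) = -(X.map (algebraMap K L)) := by
  ext i j; simp [Matrix.map_apply]

lemma aux_map_add (X Y : Matrix m n K) :
    (X + Y).map (algebraMap K L) = X.map (algebraMap K L) + Y.map (algebraMap K L) := by
  ext i j; simp [Matrix.map_apply]

lemma aux_map_sub (X Y : Matrix m n K) :
    (X - Y).map (algebraMap K L) = X.map (algebraMap K L) - Y.map (algebraMap K L) := by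
  ext i j; simp [Matrix.map_apply]

lemma aux_map_one [DecidableEq n] :
    (1 : Matrix n n K).map (algebraMap K L) = 1 :=
  Matrix.map_one _ (map_zero _) (map_one _)

end

lemma aux_map_smul {K L : Type*} [Field K] [Field L] [Algebra K L] {m n : Type*}
    (d : K) (X : Matrix m n K) :
    (d • X).map (algebraMap K L) = (algebraMap K L d) • X.map (algebraMap K L) := by
  ext i j; simp [Matrix.map_apply]

/-- Proposition 4.1.5: with `L = K(√d)`, conjugation `σ`, and the symplectic
relation `C·Aᵗ − A·Cᵗ = U − Uᵗ`, the matrix `G = μ₁·E·σ(μ₁)ᵗ` has all its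
entries in `K`. -/
theorem stmt_6 {K L : Type*} [Field K] [Field L] [Algebra K L]
    (d : K) (hd : ¬IsSquare d)
    (rt : L) (hrt : rt ^ 2 = algebraMap K L d)
    (σ : L ≃ₐ[K] L) (hσ : σ rt = -rt)
    {a b : ℕ} (ha : 1 ≤ a) (hb : 1 ≤ b)
    (A C : Matrix (Fin b) (Fin a) K) (U : Matrix (Fin b) (Fin b) K)
    (hsymp : C * A.transpose - A * C.transpose = U - U.transpose) :
    ∀ i j,
      (stmt6μ₁ rt A C U * stmt6E a b L * ((stmt6μ₁ rt A C U).map σ).transpose) i j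
        ∈ Set.range (algebraMap K L) := by
  have hrt' : rt * rt = algebraMap K L d := by rw [← sq]; exact hrt
  have hmapσ : (stmt6μ₁ rt A C U).map σ = stmt6μ₁ (-rt) A C U := by
    unfold stmt6μ₁
    ext (i | i) (j | j) <;>
      simp [Matrix.map_apply, Matrix.one_apply, apply_ite, hσ, mul_comm] <;> ring
  have key : stmt6μ₁ rt A C U * stmt6E a b L * ((stmt6μ₁ rt A C U).map σ).transpose =
      (Matrix.fromBlocks (1 + d • (C.transpose * C)) (-A.transpose + d • (C.transpose * U.transpose))
        (-A + d • (U * C))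
        (A * A.transpose - d • (C * C.transpose) - 1 + d • (U * U.transpose))).map
        (algebraMap K L) := by
    rw [hmapσ]
    unfold stmt6μ₁ stmt6E
    rw [Matrix.fromBlocks_transpose, Matrix.fromBlocks_multiply, Matrix.fromBlocks_multiply,
      Matrix.fromBlocks_map, Matrix.fromBlocks_inj]
    refine ⟨?_, ?_, ?_, ?_⟩
    · simp [Matrix.mul_smul, Matrix.smul_mul, smul_smul, hrt', aux_map_smul,
        Matrix.map_mul, Matrix.transpose_map, aux_map_add, aux_map_one, algebraMap_smul]
    · simp [Matrix.mul_smul, Matrix.smul_mul, smul_smul, hrt', aux_map_smul,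
        Matrix.map_mul, Matrix.transpose_map, aux_map_add, aux_map_neg, Matrix.mul_add, Matrix.add_mul, Matrix.mul_sub, Matrix.sub_mul, Matrix.mul_neg, Matrix.neg_mul, Matrix.mul_one, Matrix.one_mul, smul_add, smul_sub, smul_neg, neg_smul, algebraMap_smul]
    · simp [Matrix.mul_smul, Matrix.smul_mul, smul_smul, hrt', aux_map_smul,
        Matrix.map_mul, Matrix.transpose_map, aux_map_add, aux_map_neg, Matrix.mul_add, Matrix.add_mul, Matrix.mul_sub, Matrix.sub_mul, Matrix.mul_neg, Matrix.neg_mul, Matrix.mul_one, Matrix.one_mul, smul_add, smul_sub, smul_neg, neg_smul, algebraMap_smul]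
      abel
    · rw [← sub_eq_zero]
      have hD : C * Aᵀ - A * Cᵀ - (U - Uᵀ) = 0 := by rw [hsymp]; simp
      have h0 : (0 : Matrix (Fin b) (Fin b) L)
          = rt • ((C * Aᵀ - A * Cᵀ - (U - Uᵀ)).map (algebraMap K L)) := by
        rw [hD]; simp
      rw [h0]
      simp [Matrix.mul_smul, Matrix.smul_mul, smul_smul, hrt', aux_map_smul,
        Matrix.map_mul, Matrix.transpose_map, aux_map_add, aux_map_neg, aux_map_sub,
        aux_map_one, Matrix.mul_add, Matrix.add_mul, Matrix.mul_sub, Matrix.sub_mul, Matrix.mul_neg, Matrix.neg_mul, Matrix.mul_one, Matrix.one_mul, smul_add, smul_sub, smul_neg, neg_smul, algebraMap_smul]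
      abel
  intro i j
  rw [key]
  exact ⟨_, rfl⟩
end

section
/- Let F be a field, Δ ∈ F, and a, b ≥ 1. Suppose P ∈ M_a(F), Q, R ∈ M_{a×b}(F), A, C ∈ M_{b×a}(F) and U ∈ M_b(F) satisfy the two relations: −P + R·C + Q·A = I_a and Δ·P·Cᵗ − R + Δ·Q·U = 0. Then for every nonzero row vector D ∈ F^a with D·P = 0, one has D·Q ≠ 0. -/
open Matrix

/-- Lemma 4.1.10 (linear-algebra content): from the relations
`−P + R·C + Q·A = I` and `Δ·P·Cᵗ − R + Δ·Q·U = 0`, any nonzero row vector `D`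
with `D·P = 0` satisfies `D·Q ≠ 0`. -/
theorem stmt_7 {F : Type*} [Field F] (Δ : F) {a b : ℕ} (ha : 1 ≤ a) (hb : 1 ≤ b)
    (P : Matrix (Fin a) (Fin a) F) (Q R : Matrix (Fin a) (Fin b) F)
    (A C : Matrix (Fin b) (Fin a) F) (U : Matrix (Fin b) (Fin b) F)
    (h1 : -P + R * C + Q * A = 1)
    (h2 : Δ • (P * C.transpose) - R + Δ • (Q * U) = 0)
    (D : Fin a → F) (hD : D ≠ 0) (hDP : Matrix.vecMul D P = 0) :
    Matrix.vecMul D Q ≠ 0 := by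
  intro hDQ
  apply hD
  have hR : Δ • (P * C.transpose) + Δ • (Q * U) - R = 0 := by
    rw [← h2]; abel
  have hR' : R = Δ • (P * C.transpose) + Δ • (Q * U) := (sub_eq_zero.mp hR).symm
  have hDR : Matrix.vecMul D R = 0 := by
    rw [hR']
    rw [Matrix.vecMul_add]
    rw [← Matrix.mul_smul, ← Matrix.mul_smul, ← Matrix.vecMul_vecMul,
      ← Matrix.vecMul_vecMul, hDP, hDQ]
    simp
  have := congrArg (Matrix.vecMul D) h1
  rw [Matrix.vecMul_add, Matrix.vecMul_add, Matrix.vecMul_neg, hDP,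
    ← Matrix.vecMul_vecMul, ← Matrix.vecMul_vecMul, hDR, hDQ, Matrix.vecMul_one] at this
  simpa using this.symm
end

section
/- Let K be a field and let F ∈ M₃(K) be a symmetric invertible matrix with F₁₁ = 0, in block form F = [[0, F₁₂],[F₂₁, F₂₂]] (blocks of sizes 1 and 2), and G = F⁻¹ = [[G₁₁, G₁₂],[G₂₁, G₂₂]]. For a column 2-vector X set X^O = (−x₂, x₁)ᵗ. Then the determinant of the 2×2 matrix whose columns are F₂₁ and G₂₁^O equals 1. -/
open Matrix

/-- Identity (4.1.11.4): for a symmetric invertible `3×3` matrix `F` with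
`F₁₁ = 0` and `G = F⁻¹`, the determinant of the `2×2` matrix with columns
`F₂₁` and `G₂₁^O` equals `1`. -/
theorem stmt_10 {K : Type*} [Field K] (F : Matrix (Fin 3) (Fin 3) K)
    (hs : F.IsSymm) (hinv : IsUnit F.det) (h11 : F 0 0 = 0) :
    (!![F 1 0, -(F⁻¹ 2 0); F 2 0, F⁻¹ 1 0]).det = 1 := by
  have h := Matrix.mul_nonsing_inv F hinv
  have h00 := congrFun (congrFun h 0) 0
  have e1 : F 0 1 = F 1 0 := hs.apply 1 0
  have e2 : F 0 2 = F 2 0 := hs.apply 2 0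
  simp [Matrix.mul_apply, Fin.sum_univ_three, Matrix.one_apply, h11] at h00
  simp [Matrix.det_fin_two]
  linear_combination h00 - e1 * F⁻¹ 1 0 - e2 * F⁻¹ 2 0
end

section
/- Let K be a field, d ∈ K a non-square, L = K(√d), and g ≥ 2. Let A, C ∈ M_{(g−1)×1}(K) be column vectors and U ∈ M_{g−1}(K) satisfy C·Aᵗ − A·Cᵗ = U − Uᵗ. Define the g×g matrices over L: μ₁ = [[−1, −Cᵗ√d],[A + C√d, −I − U√d]] and μ₂ = [[√d, −Aᵗ√d],[A + C√d, −I − U√d]]. If det(μ₁) = 0 and det(μ₂) = 0, then the (g−1)×g matrix (A + C√d | −I − U√d) has rank at most g − 2. -/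
open Matrix

/-!
Write `s = rt` (the `√d` of the paper) and `N = (B | M)` with `B = A + s C`, `M = -1 - s U`.
If `N` had full rank, `det μᵢ = 0` would put the top row of each `μᵢ` in the row space of `N`:
`x N = (-1 | -s Cᵗ)` and `y N = (s | -s Aᵗ)` for some row vectors `x, y`. The second blocks say
`x = s (Cᵗ - x U)` and `y = s (Aᵗ - y U)`, so computing `x ⬝ y = y ⬝ x` both ways and using
`x (U - Uᵗ) yᵗ = x (C Aᵗ - A Cᵗ) yᵗ` yields, together with the first blocks, `s = 0`.
But then `x = 0`, contradicting `x B = -1`.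
-/

namespace Matrix

section Rows

variable {K : Type*} [Field K] {m : Type*} [Fintype m]

theorem linearIndependent_rows_iff_rank_eq_card {n : Type*} [Fintype n] {A : Matrix m n K} :
    LinearIndependent K A.row ↔ A.rank = Fintype.card m := by
  rw [rank_eq_finrank_span_row, linearIndependent_iff_card_eq_finrank_span, Set.finrank, eq_comm]

theorem mem_span_rows_of_det_fromRows_eq_zero [DecidableEq m]
    {R : Matrix (Fin 1) (Fin 1 ⊕ m) K} {N : Matrix m (Fin 1 ⊕ m) K}
    (hN : LinearIndependent K N.row) (h : (fromRows R N).det = 0) :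
    R 0 ∈ Submodule.span K (Set.range N.row) := by
  by_contra hR
  have hR0 : R 0 ≠ 0 := fun h0 => hR (h0 ▸ zero_mem _)
  have hind : LinearIndependent K (fromRows R N).row := by
    refine linearIndependent_sum.mpr ⟨linearIndependent_unique_iff.mpr hR0, hN, ?_⟩
    have hinl : Set.range ((fromRows R N).row ∘ Sum.inl) = {R 0} := Set.range_unique
    rw [disjoint_comm, hinl]
    exact (Submodule.disjoint_span_singleton' hR0).mpr hR
  exact ((isUnit_iff_isUnit_det _).mp (linearIndependent_rows_iff_isUnit.mp hind)).ne_zero h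

end Rows

section Symplectic

variable {R : Type*} [CommRing R] {n : Type*} [Fintype n]

theorem vecMul_dotProduct_sub_vecMul_dotProduct (u : Matrix n n R) (x y : n → R) :
    x ᵥ* u ⬝ᵥ y - y ᵥ* u ⬝ᵥ x = x ᵥ* (u - uᵀ) ⬝ᵥ y := by
  rw [vecMul_sub, sub_dotProduct, vecMul_transpose, dotProduct_comm (u *ᵥ x), dotProduct_mulVec]

variable [DecidableEq n] [Nontrivial R] {u : Matrix n n R} {t : R} {x y : n → R}

theorem false_of_vecMul_eq_of_vecMulVec_sub_eq {a c : n → R}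
    (hsymp : vecMulVec c a - vecMulVec a c = u - uᵀ)
    (hx₁ : x ⬝ᵥ (a + t • c) = -1) (hx₂ : x ᵥ* (-1 - t • u) = -(t • c))
    (hy₁ : y ⬝ᵥ (a + t • c) = t) (hy₂ : y ᵥ* (-1 - t • u) = -(t • a)) : False := by
  have hx : x = t • (c - x ᵥ* u) := by
    rw [vecMul_sub, vecMul_neg, vecMul_one, vecMul_smul] at hx₂
    linear_combination (norm := module) -hx₂
  have hy : y = t • (a - y ᵥ* u) := by
    rw [vecMul_sub, vecMul_neg, vecMul_one, vecMul_smul] at hy₂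
    linear_combination (norm := module) -hy₂
  have hxy : x ⬝ᵥ y = t * (y ⬝ᵥ c - x ᵥ* u ⬝ᵥ y) := by
    conv_lhs => rw [hx]
    rw [smul_dotProduct, sub_dotProduct, smul_eq_mul, dotProduct_comm c]
  have hyx : x ⬝ᵥ y = t * (x ⬝ᵥ a - y ᵥ* u ⬝ᵥ x) := by
    conv_lhs => rw [dotProduct_comm, hy]
    rw [smul_dotProduct, sub_dotProduct, smul_eq_mul, dotProduct_comm a]
  have hskew := vecMul_dotProduct_sub_vecMul_dotProduct u x y
  rw [← hsymp, vecMul_sub, vecMul_vecMulVec, vecMul_vecMulVec, sub_dotProduct, smul_dotProduct,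
    smul_dotProduct, smul_eq_mul, smul_eq_mul, dotProduct_comm a, dotProduct_comm c] at hskew
  rw [dotProduct_add, dotProduct_smul, smul_eq_mul] at hx₁ hy₁
  have ht : t = 0 := by
    linear_combination hyx - hxy + t * hskew - t * (y ⬝ᵥ c - 1) * hx₁ + t * (x ⬝ᵥ c) * hy₁
  have hx0 : x = 0 := by rw [hx, ht, zero_smul]
  simp [hx0] at hx₁

theorem false_of_vecMul_fromCols_eq {a c : Matrix n (Fin 1) R}
    (hsymp : c * aᵀ - a * cᵀ = u - uᵀ)
    (hx : x ᵥ* fromCols (a + t • c) (-1 - t • u) = fromCols (-1) (-(t • cᵀ)) 0)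
    (hy : y ᵥ* fromCols (a + t • c) (-1 - t • u) = fromCols (t • 1) (-(t • aᵀ)) 0) :
    False := by
  refine false_of_vecMul_eq_of_vecMulVec_sub_eq (a := aᵀ 0) (c := cᵀ 0) (u := u) (t := t)
    (x := x) (y := y) ?_ ?_ ?_ ?_ ?_
  · rw [← hsymp]; ext i j; simp [vecMulVec, mul_apply]
  · simpa [vecMul, dotProduct] using congrFun hx (Sum.inl 0)
  · ext j; simpa using congrFun hx (Sum.inr j)
  · simpa [vecMul, dotProduct] using congrFun hy (Sum.inl 0)
  · ext j; simpa using congrFun hy (Sum.inr j)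

end Symplectic

end Matrix

theorem stmt_11_general {K L : Type*} [Field K] [Field L] [Algebra K L]
    (rt : L)
    {n : ℕ}
    (A C : Matrix (Fin n) (Fin 1) K) (U : Matrix (Fin n) (Fin n) K)
    (hsymp : C * A.transpose - A * C.transpose = U - U.transpose)
    (h₁ : (Matrix.fromBlocks
        (-1 : Matrix (Fin 1) (Fin 1) L)
        (-(rt • (C.transpose.map (algebraMap K L))))
        (A.map (algebraMap K L) + rt • C.map (algebraMap K L))
        (-1 - rt • U.map (algebraMap K L))).det = 0)
    (h₂ : (Matrix.fromBlocks
        (rt • (1 : Matrix (Fin 1) (Fin 1) L))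
        (-(rt • (A.transpose.map (algebraMap K L))))
        (A.map (algebraMap K L) + rt • C.map (algebraMap K L))
        (-1 - rt • U.map (algebraMap K L))).det = 0) :
    (Matrix.fromCols
        (A.map (algebraMap K L) + rt • C.map (algebraMap K L))
        (-1 - rt • U.map (algebraMap K L))).rank ≤ n - 1 := by
  set f := algebraMap K L
  set N := fromCols (A.map f + rt • C.map f) (-1 - rt • U.map f)
  by_contra hrank
  have hN : LinearIndependent L N.row :=
    linearIndependent_rows_iff_rank_eq_card.mpr
      (N.rank_le_card_height.antisymm (by rw [Fintype.card_fin]; omega))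
  have hsympL : C.map f * (A.map f)ᵀ - A.map f * (C.map f)ᵀ = U.map f - (U.map f)ᵀ := by
    simpa [Matrix.map_sub, Matrix.map_mul, transpose_map] using congrArg (Matrix.map · f) hsymp
  rw [← fromRows_fromCols_eq_fromBlocks, transpose_map] at h₁ h₂
  obtain ⟨x, hx⟩ : _ ∈ LinearMap.range N.vecMulLinear :=
    range_vecMulLinear N ▸ mem_span_rows_of_det_fromRows_eq_zero hN h₁
  obtain ⟨y, hy⟩ : _ ∈ LinearMap.range N.vecMulLinear :=
    range_vecMulLinear N ▸ mem_span_rows_of_det_fromRows_eq_zero hN h₂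
  exact false_of_vecMul_fromCols_eq hsympL hx hy

/-- Lemma 4.1.12 (Zelevinskij): with `g = n + 1 ≥ 2`, columns `A, C`, and `U`
satisfying `CAᵗ − ACᵗ = U − Uᵗ`, if both `det μ₁ = 0` and `det μ₂ = 0` then the
`(g−1)×g` matrix `(A + C√d | −I − U√d)` has rank at most `g − 2 = n − 1`. -/
theorem stmt_11 {K L : Type*} [Field K] [Field L] [Algebra K L]
    (d : K) (hd : ¬IsSquare d)
    (rt : L) (hrt : rt ^ 2 = algebraMap K L d)
    {n : ℕ} (hn : 1 ≤ n)
    (A C : Matrix (Fin n) (Fin 1) K) (U : Matrix (Fin n) (Fin n) K)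
    (hsymp : C * A.transpose - A * C.transpose = U - U.transpose)
    (h₁ : (Matrix.fromBlocks
        (-1 : Matrix (Fin 1) (Fin 1) L)
        (-(rt • (C.transpose.map (algebraMap K L))))
        (A.map (algebraMap K L) + rt • C.map (algebraMap K L))
        (-1 - rt • U.map (algebraMap K L))).det = 0)
    (h₂ : (Matrix.fromBlocks
        (rt • (1 : Matrix (Fin 1) (Fin 1) L))
        (-(rt • (A.transpose.map (algebraMap K L))))
        (A.map (algebraMap K L) + rt • C.map (algebraMap K L))
        (-1 - rt • U.map (algebraMap K L))).det = 0) :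
    (Matrix.fromCols
        (A.map (algebraMap K L) + rt • C.map (algebraMap K L))
        (-1 - rt • U.map (algebraMap K L))).rank ≤ n - 1 :=
  stmt_11_general rt A C U hsymp h₁ h₂
end

section
/- Let p be an odd prime and Δ ∈ 𝔽_p^* such that −Δ is not a square in 𝔽_p. Then the system of equations over 𝔽_p: a₁² + a₂² = 1, c₁² + c₂² = Δ⁻¹, a₁·c₁ + a₂·c₂ = 0 has a solution (a₁, a₂, c₁, c₂) ∈ 𝔽_p⁴ if and only if p ≡ 3 (mod 4). Moreover, when p ≡ 3 (mod 4), every solution satisfies (c₁, c₂) = ε·r·(a₂, −a₁) for some ε ∈ {±1}, where r ∈ 𝔽_p is a fixed square root of Δ⁻¹. -/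
/-- Computational core of Theorem 5.1.1: the system
`a₁² + a₂² = 1`, `c₁² + c₂² = Δ⁻¹`, `a₁c₁ + a₂c₂ = 0` over `𝔽_p` (with `−Δ` a
non-square) has a solution iff `p ≡ 3 (mod 4)`; and in that case every solution
satisfies `(c₁, c₂) = ε·r·(a₂, −a₁)` with `ε = ±1`, where `r` is a fixed square
root of `Δ⁻¹` in `𝔽_p`. -/
theorem stmt_12 {p : ℕ} [Fact p.Prime] (hp : p ≠ 2)
    (Δ : ZMod p) (hΔ : Δ ≠ 0) (hns : ¬IsSquare (-Δ)) :
    ((∃ a₁ a₂ c₁ c₂ : ZMod p,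
        a₁ ^ 2 + a₂ ^ 2 = 1 ∧ c₁ ^ 2 + c₂ ^ 2 = Δ⁻¹ ∧ a₁ * c₁ + a₂ * c₂ = 0)
      ↔ p % 4 = 3)
    ∧ (p % 4 = 3 → ∀ r : ZMod p, r ^ 2 = Δ⁻¹ → ∀ a₁ a₂ c₁ c₂ : ZMod p,
        a₁ ^ 2 + a₂ ^ 2 = 1 → c₁ ^ 2 + c₂ ^ 2 = Δ⁻¹ → a₁ * c₁ + a₂ * c₂ = 0 →
        ∃ ε : ZMod p, (ε = 1 ∨ ε = -1) ∧ c₁ = ε * r * a₂ ∧ c₂ = -(ε * r * a₁)) := by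
  have hΔinv : (Δ⁻¹ : ZMod p) ≠ 0 := inv_ne_zero hΔ
  -- if -1 is a nonsquare then Δ is a square
  have key : ¬ IsSquare (-1 : ZMod p) → IsSquare Δ := by
    intro h1
    by_contra hΔsq
    apply hns
    have c1 : quadraticChar (ZMod p) (-1) = -1 :=
      quadraticChar_neg_one_iff_not_isSquare.mpr h1
    have cΔ : quadraticChar (ZMod p) Δ = -1 :=
      quadraticChar_neg_one_iff_not_isSquare.mpr hΔsq
    have : quadraticChar (ZMod p) (-Δ) = 1 := by
      have : (-Δ : ZMod p) = (-1) * Δ := by ring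
      rw [this, map_mul, c1, cΔ]; ring
    exact (quadraticChar_one_iff_isSquare (neg_ne_zero.mpr hΔ)).mp this
  constructor
  · constructor
    · rintro ⟨a₁, a₂, c₁, c₂, h1, h2, h3⟩
      by_contra hmod
      -- then -1 is a square, and Δ⁻¹ = (a₁c₂ - a₂c₁)² is a square, so Δ is a square
      have hneg1 : IsSquare (-1 : ZMod p) := (ZMod.exists_sq_eq_neg_one_iff).mpr hmod
      have hd : (a₁ * c₂ - a₂ * c₁) ^ 2 = Δ⁻¹ := by
        linear_combination (c₁ ^ 2 + c₂ ^ 2) * h1 + h2 - (a₁ * c₁ + a₂ * c₂) * h3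
      have hΔsq : IsSquare Δ := by
        have : IsSquare (Δ⁻¹ : ZMod p) := ⟨a₁ * c₂ - a₂ * c₁, by rw [← hd]; ring⟩
        simpa using this.inv
      apply hns
      obtain ⟨i, hi⟩ := hneg1
      obtain ⟨s, hs⟩ := hΔsq
      exact ⟨i * s, by linear_combination (-1 : ZMod p) * hs + s * s * hi⟩
    · intro hmod
      have hΔsq : IsSquare Δ := key (by rw [ZMod.exists_sq_eq_neg_one_iff]; simp [hmod])
      obtain ⟨s, hs⟩ := hΔsq
      have hs' : s ≠ 0 := by rintro rfl; simp at hs; exact hΔ hs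
      refine ⟨1, 0, 0, s⁻¹, by ring, ?_, by ring⟩
      rw [hs]; field_simp; ring
  · intro _ r hr a₁ a₂ c₁ c₂ h1 h2 h3
    have hr0 : r ≠ 0 := by rintro rfl; rw [← hr] at hΔinv; simp at hΔinv
    set d := a₁ * c₂ - a₂ * c₁ with hdd
    have hd : d ^ 2 = Δ⁻¹ := by
      linear_combination (c₁ ^ 2 + c₂ ^ 2) * h1 + h2 - (a₁ * c₁ + a₂ * c₂) * h3
    have hc1 : c₁ = -a₂ * d := by
      simp only [hdd]; linear_combination a₁ * h3 - c₁ * h1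
    have hc2 : c₂ = a₁ * d := by
      simp only [hdd]; linear_combination a₂ * h3 - c₂ * h1
    have : (d - r) * (d + r) = 0 := by linear_combination hd - hr
    rcases mul_eq_zero.mp this with h | h
    · have hdr : d = r := sub_eq_zero.mp h
      exact ⟨-1, Or.inr rfl, by rw [hc1, hdr]; ring, by rw [hc2, hdr]; ring⟩
    · have hdr : d = -r := eq_neg_of_add_eq_zero_left h
      exact ⟨1, Or.inl rfl, by rw [hc1, hdr]; ring, by rw [hc2, hdr]; ring⟩
end

section
/- Let K = ℚ(√−Δ) be an imaginary quadratic field, p a rational prime that is inert in K, g an odd positive integer, and E = diag(I_r, −I_s) with r + s = g. Then there is no matrix M ∈ M_g(K) satisfying M·E·M̄ᵗ = p·E, where M̄ is the entrywise complex conjugate of M. -/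
open Matrix

lemma descent_aux {Δ : ℤ} {p : ℕ} [Fact p.Prime]
    (hinert : ¬IsSquare ((-Δ : ZMod p))) :
    ∀ n : ℕ, ∀ d a b : ℤ, d.natAbs = n → d ≠ 0 → a^2 + Δ * b^2 ≠ (p:ℤ) * d^2 := by
  intro n
  induction n using Nat.strong_induction_on with
  | _ n ih =>
    intro d a b hn hd heq
    have hp : Prime (p : ℤ) := Nat.prime_iff_prime_int.mp Fact.out
    have hpne : (p : ℤ) ≠ 0 := hp.ne_zero
    have h0 : (a : ZMod p)^2 + (Δ:ZMod p) * (b:ZMod p)^2 = 0 := by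
      have := congrArg (Int.cast : ℤ → ZMod p) heq
      push_cast at this
      rw [this]; simp
    have hb : (p:ℤ) ∣ b := by
      by_contra hb
      apply hinert
      have hbz : (b : ZMod p) ≠ 0 := by
        rwa [Ne, ZMod.intCast_zmod_eq_zero_iff_dvd]
      refine ⟨(a : ZMod p) / (b : ZMod p), ?_⟩
      field_simp
      linear_combination -h0
    have ha : (p:ℤ) ∣ a := by
      have h2 : (p:ℤ) ∣ a^2 := by
        have : a^2 = (p:ℤ) * d^2 - Δ * b^2 := by linarith
        rw [this]
        exact dvd_sub ⟨d^2, rfl⟩ (Dvd.dvd.mul_left (dvd_pow hb two_ne_zero) Δ)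
      exact hp.dvd_of_dvd_pow h2
    obtain ⟨a₀, rfl⟩ := ha
    obtain ⟨b₀, rfl⟩ := hb
    have key : (p:ℤ) * (a₀^2 + Δ * b₀^2) = d^2 := by
      have h3 : (p:ℤ) * ((p:ℤ) * (a₀^2 + Δ * b₀^2)) = (p:ℤ) * d^2 := by ring_nf; linear_combination heq
      exact mul_left_cancel₀ hpne h3
    have hd2 : (p:ℤ) ∣ d := hp.dvd_of_dvd_pow (n := 2) ⟨_, key.symm⟩
    obtain ⟨d₀, rfl⟩ := hd2
    have hd₀ : d₀ ≠ 0 := by rintro rfl; simp at hd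
    have key2 : a₀^2 + Δ * b₀^2 = (p:ℤ) * d₀^2 := by
      have h4 : (p:ℤ) * (a₀^2 + Δ * b₀^2) = (p:ℤ) * ((p:ℤ) * d₀^2) := by ring_nf; linear_combination key
      exact mul_left_cancel₀ hpne h4
    have hlt : d₀.natAbs < n := by
      have hp2 : 2 ≤ p := (Fact.out : p.Prime).two_le
      have : ((p:ℤ) * d₀).natAbs = p * d₀.natAbs := by
        rw [Int.natAbs_mul, Int.natAbs_natCast]
      have h5 : d₀.natAbs ≠ 0 := Int.natAbs_ne_zero.2 hd₀
      have hn' : n = p * d₀.natAbs := by rw [← hn, this]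
      rw [hn']
      exact lt_mul_of_one_lt_left (Nat.pos_of_ne_zero h5) hp2
    exact ih d₀.natAbs hlt d₀ a₀ b₀ rfl hd₀ key2

/-- no rational solution to `u² + Δ v² = p^g` for odd `g`. -/
lemma no_rat_sol {Δ : ℤ} {p : ℕ} [Fact p.Prime]
    (hinert : ¬IsSquare ((-Δ : ZMod p))) {g : ℕ} (hodd : Odd g)
    (u v : ℚ) : u^2 + (Δ:ℚ) * v^2 ≠ (p:ℚ)^g := by
  intro hq
  obtain ⟨m, hm⟩ := hodd
  set a : ℤ := u.num * v.den with ha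
  set b : ℤ := v.num * u.den with hb
  set c : ℤ := (u.den : ℤ) * v.den with hc
  set d : ℤ := (p:ℤ)^m * c with hd
  have hcpos : 0 < c := by positivity
  have hdne : d ≠ 0 := by
    have : (p:ℤ) ≠ 0 := by exact_mod_cast (Fact.out : p.Prime).ne_zero
    positivity
  have hu : (u.num : ℚ) = u * u.den := (Rat.mul_den_eq_num u).symm
  have hv : (v.num : ℚ) = v * v.den := (Rat.mul_den_eq_num v).symm
  have hQ : (a:ℚ)^2 + (Δ:ℚ) * (b:ℚ)^2 = (p:ℚ) * (d:ℚ)^2 := by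
    have hpow : (p:ℚ)^g = (p:ℚ) * ((p:ℚ)^m)^2 := by
      rw [hm, pow_succ, pow_mul]; ring
    push_cast [ha, hb, hc, hd]
    rw [hu, hv]
    linear_combination ((u.den:ℚ)*v.den)^2 * hq + ((u.den:ℚ)*v.den)^2 * hpow
  have hZ : a^2 + Δ * b^2 = (p:ℤ) * d^2 := by exact_mod_cast hQ
  exact descent_aux hinert d.natAbs d a b rfl hdne hZ

/-- Theorem 3.3.5 (key step): if `K = ℚ(√−Δ)` is an imaginary quadratic field,
`p` an odd prime inert in `K` (i.e. `−Δ` is a non-square mod `p`), `g = r + s`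
odd and `E = diag(I_r, −I_s)`, then there is no `M ∈ M_g(K)` with
`M·E·M̄ᵗ = p·E`. -/
theorem stmt_14 {Δ : ℤ} (hΔpos : 0 < Δ)
    {p : ℕ} [Fact p.Prime] (hp2 : p ≠ 2)
    (hinert : ¬IsSquare ((-Δ : ZMod p)))
    {K : Type*} [Field K] [Algebra ℚ K]
    (rt : K) (hrt : rt ^ 2 = algebraMap ℚ K (-Δ : ℚ))
    (hspan : ∀ x : K, ∃ u v : ℚ, x = algebraMap ℚ K u + algebraMap ℚ K v * rt)
    (σ : K ≃ₐ[ℚ] K) (hσ : σ rt = -rt)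
    {r s : ℕ} (hodd : Odd (r + s)) :
    ¬ ∃ M : Matrix (Fin r ⊕ Fin s) (Fin r ⊕ Fin s) K,
        M * Matrix.fromBlocks 1 0 0 (-1) * (M.map σ).transpose
          = (p : K) • Matrix.fromBlocks 1 0 0 (-1) := by
  rintro ⟨M, hM⟩
  -- take determinants
  have hdet := congrArg Matrix.det hM
  simp only [det_mul, det_transpose, det_smul] at hdet
  have hE : (Matrix.fromBlocks (1 : Matrix (Fin r) (Fin r) K) 0 0
      (-1 : Matrix (Fin s) (Fin s) K)).det = (-1:K)^s := by
    rw [det_fromBlocks_zero₁₂, det_one, one_mul]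
    rw [show (-1 : Matrix (Fin s) (Fin s) K) = -(1) from rfl, det_neg, det_one, mul_one]
    simp
  have hσdet : (M.map σ).det = σ M.det := ((σ : K →+* K).map_det M).symm
  rw [hE, hσdet] at hdet
  have hcard : Fintype.card (Fin r ⊕ Fin s) = r + s := by simp
  rw [hcard] at hdet
  -- cancel (-1)^s
  have hprod : M.det * σ M.det = (p:K)^(r+s) := by
    have hne : ((-1:K)^s) ≠ 0 := pow_ne_zero _ (by norm_num)
    apply mul_right_cancel₀ hne
    linear_combination hdet
  -- express det M in the basis
  obtain ⟨u, v, huv⟩ := hspan M.det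
  set A := algebraMap ℚ K with hA
  have hσM : σ M.det = A u - A v * rt := by
    rw [huv, map_add, _root_.map_mul]
    rw [AlgEquiv.commutes, AlgEquiv.commutes, hσ]
    ring
  have hrt' : rt^2 = -(A (Δ:ℚ)) := by rw [hrt, map_neg]
  have hK : A (u^2 + (Δ:ℚ) * v^2) = A ((p:ℚ)^(r+s)) := by
    rw [map_add, _root_.map_mul, map_pow, map_pow, map_pow]
    have hAp : A (p:ℚ) = (p:K) := by simp [hA]
    rw [hAp]
    rw [hσM, huv] at hprod
    linear_combination hprod + (A v)^2 * hrt'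
  have hq : u^2 + (Δ:ℚ) * v^2 = (p:ℚ)^(r+s) := (algebraMap ℚ K).injective hK
  exact no_rat_sol hinert hodd u v hq
end

section
/- Let p be an odd prime, Δ ∈ 𝔽_p^* with −Δ not a square in 𝔽_p, and write √−Δ for a fixed square root of −Δ in 𝔽_{p²}. Let g = r + s, E = diag(I_r, −I_s), and let s₂ ∈ M_g(𝔽_p) be symmetric such that T₂ = E + Δ·s₂·E·s₂ is singular (det T₂ = 0). Then there exist no matrices h, k ∈ M_g(𝔽_p) and scalar λ ∈ 𝔽_p^* such that the matrix 𝔤 = h + k·√−Δ ∈ M_g(𝔽_{p²}) satisfies both 𝔤·E·𝔤̄ᵗ = λ·E (where bar is the conjugation √−Δ ↦ −√−Δ applied entrywise) and 𝔤·(I_g − √−Δ·s₂·E) ∈ M_g(𝔽_p). -/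
open Matrix


set_option linter.unusedSectionVars false

section Aux
variable {p : ℕ} [Fact p.Prime] {L : Type*} [Field L] [Algebra (ZMod p) L]
variable {n : Type*} [Fintype n] [DecidableEq n]

lemma key_indep {Δ : ZMod p} (hns : ¬IsSquare (-Δ))
    {rt : L} (hrt : rt ^ 2 = algebraMap (ZMod p) L (-Δ)) :
    ∀ x y z : ZMod p, algebraMap (ZMod p) L x + rt * algebraMap (ZMod p) L y
      = algebraMap (ZMod p) L z → y = 0 ∧ x = z := by
  intro x y z hxyz
  have hinj := (algebraMap (ZMod p) L).injective
  by_cases hy : y = 0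
  · subst hy
    simp only [map_zero, mul_zero, add_zero] at hxyz
    exact ⟨rfl, hinj hxyz⟩
  · exfalso
    apply hns
    have hyne : (algebraMap (ZMod p) L y) ≠ 0 := fun h0 => hy (hinj (by simpa using h0))
    have h1 : rt * algebraMap (ZMod p) L y = algebraMap (ZMod p) L (z - x) := by
      rw [map_sub]; linear_combination hxyz
    have h2 : rt = algebraMap (ZMod p) L ((z - x) * y⁻¹) := by
      rw [_root_.map_mul, map_inv₀, eq_mul_inv_iff_mul_eq₀ hyne]; exact h1
    refine ⟨(z - x) * y⁻¹, ?_⟩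
    have h3 : algebraMap (ZMod p) L (((z - x) * y⁻¹) ^ 2) = algebraMap (ZMod p) L (-Δ) := by
      rw [map_pow, ← h2, hrt]
    have := hinj h3
    rw [← this]; ring

lemma map_smul'' (c : ZMod p) (X : Matrix n n (ZMod p)) :
    (c • X).map (algebraMap (ZMod p) L)
      = algebraMap (ZMod p) L c • X.map (algebraMap (ZMod p) L) := by
  ext i j
  simp [Matrix.map_apply, Matrix.smul_apply, smul_eq_mul, _root_.map_mul]

lemma mmap_add (X Y : Matrix n n (ZMod p)) :
    (X + Y).map (algebraMap (ZMod p) L)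
      = X.map (algebraMap (ZMod p) L) + Y.map (algebraMap (ZMod p) L) := by
  ext i j; simp [Matrix.map_apply]

lemma mmap_sub (X Y : Matrix n n (ZMod p)) :
    (X - Y).map (algebraMap (ZMod p) L)
      = X.map (algebraMap (ZMod p) L) - Y.map (algebraMap (ZMod p) L) := by
  ext i j; simp [Matrix.map_apply]

lemma mmap_mul (X Y : Matrix n n (ZMod p)) :
    (X * Y).map (algebraMap (ZMod p) L)
      = X.map (algebraMap (ZMod p) L) * Y.map (algebraMap (ZMod p) L) :=
  Matrix.map_mul

end Aux

/-- Core computation of Theorem 3.3.3: if `T₂ = E + Δ·s₂·E·s₂` is singular,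
there are no `h, k ∈ M_g(𝔽_p)` and `λ ∈ 𝔽_p^*` such that
`𝔤 = h + k·√−Δ ∈ M_g(𝔽_{p²})` satisfies both `𝔤·E·𝔤̄ᵗ = λ·E` and
`𝔤·(I − √−Δ·s₂·E) ∈ M_g(𝔽_p)`. -/
theorem stmt_16 {p : ℕ} [Fact p.Prime] (hp : p ≠ 2)
    (Δ : ZMod p) (hΔ : Δ ≠ 0) (hns : ¬IsSquare (-Δ))
    {L : Type*} [Field L] [Algebra (ZMod p) L]
    (rt : L) (hrt : rt ^ 2 = algebraMap (ZMod p) L (-Δ))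
    (σ : L ≃ₐ[ZMod p] L) (hσ : σ rt = -rt)
    {a b : ℕ}
    (s₂ : Matrix (Fin a ⊕ Fin b) (Fin a ⊕ Fin b) (ZMod p)) (hs₂ : s₂.IsSymm)
    (hsing :
      ((Matrix.fromBlocks 1 0 0 (-1) : Matrix (Fin a ⊕ Fin b) (Fin a ⊕ Fin b) (ZMod p))
        + Δ • (s₂ * Matrix.fromBlocks 1 0 0 (-1) * s₂)).det = 0) :
    ¬ ∃ (h k : Matrix (Fin a ⊕ Fin b) (Fin a ⊕ Fin b) (ZMod p)) (lam : ZMod p),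
        lam ≠ 0
        ∧ (h.map (algebraMap (ZMod p) L) + rt • k.map (algebraMap (ZMod p) L))
            * (Matrix.fromBlocks 1 0 0 (-1)).map (algebraMap (ZMod p) L)
            * (((h.map (algebraMap (ZMod p) L)
                + rt • k.map (algebraMap (ZMod p) L)).map σ).transpose)
          = algebraMap (ZMod p) L lam
              • (Matrix.fromBlocks 1 0 0 (-1)).map (algebraMap (ZMod p) L)
        ∧ ∀ i j,
            (((h.map (algebraMap (ZMod p) L) + rt • k.map (algebraMap (ZMod p) L))
              * (1 - rt • (s₂ * Matrix.fromBlocks 1 0 0 (-1)).map (algebraMap (ZMod p) L)))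
              i j) ∈ Set.range (algebraMap (ZMod p) L) := by
  rintro ⟨h, k, lam, hlam, huni, hreal⟩
  set Ep : Matrix (Fin a ⊕ Fin b) (Fin a ⊕ Fin b) (ZMod p) := fromBlocks 1 0 0 (-1)
    with hEpdef
  have hkey := key_indep hns hrt
  -- basic facts about Ep
  have hEpT : Epᵀ = Ep := by
    simp [hEpdef, Matrix.fromBlocks_transpose]
  have hEpE : Ep * Ep = 1 := by
    simp [hEpdef, Matrix.fromBlocks_multiply, ← Matrix.fromBlocks_one]
  have hrr : rt * rt = -((algebraMap (ZMod p) L) Δ) := by rw [← sq, hrt, map_neg]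
  -- step 1 : k = h * (s₂ * Ep)
  have expand1 : (h.map (algebraMap (ZMod p) L) + rt • k.map (algebraMap (ZMod p) L)) * (1 - rt • (s₂ * Ep).map (algebraMap (ZMod p) L))
      = (h + Δ • (k * (s₂ * Ep))).map (algebraMap (ZMod p) L) + rt • ((k - h * (s₂ * Ep)).map (algebraMap (ZMod p) L)) := by
    simp only [mmap_add, mmap_sub, mmap_mul, map_smul'', mul_sub, mul_one,
      add_mul, mul_smul_comm, smul_mul_assoc, smul_smul, smul_sub, smul_add, hrr, mul_assoc]
    module
  have hk : k = h * (s₂ * Ep) := by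
    have h0 : ∀ i j, (k - h * (s₂ * Ep)) i j = 0 := by
      intro i j
      obtain ⟨z, hz⟩ := hreal i j
      rw [expand1] at hz
      simp only [Matrix.add_apply, Matrix.smul_apply, Matrix.map_apply, smul_eq_mul] at hz
      exact (hkey _ _ _ hz.symm).1
    have : k - h * (s₂ * Ep) = 0 := by ext i j; simpa using h0 i j
    exact sub_eq_zero.mp this
  -- step 2 : real part of the unitary condition
  have hσmap : ((h.map (algebraMap (ZMod p) L) + rt • k.map (algebraMap (ZMod p) L)).map σ) = h.map (algebraMap (ZMod p) L) - rt • k.map (algebraMap (ZMod p) L) := by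
    ext i j
    simp [Matrix.map_apply, Matrix.add_apply, Matrix.sub_apply, Matrix.smul_apply,
      smul_eq_mul, hσ, AlgEquiv.commutes]
    ring
  have expand2 : (h.map (algebraMap (ZMod p) L) + rt • k.map (algebraMap (ZMod p) L)) * Ep.map (algebraMap (ZMod p) L) * ((h.map (algebraMap (ZMod p) L) - rt • k.map (algebraMap (ZMod p) L))ᵀ)
      = (h * Ep * hᵀ + Δ • (k * Ep * kᵀ)).map (algebraMap (ZMod p) L)
        + rt • ((k * Ep * hᵀ - h * Ep * kᵀ).map (algebraMap (ZMod p) L)) := by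
    simp only [mmap_add, mmap_sub, mmap_mul, map_smul'',
      Matrix.transpose_sub, Matrix.transpose_smul, Matrix.transpose_map,
      mul_sub, sub_mul, add_mul, mul_add,
      mul_smul_comm, smul_mul_assoc, smul_smul, smul_sub, smul_add, hrr, mul_assoc]
    module
  rw [hσmap, expand2] at huni
  have huni' : (h * Ep * hᵀ + Δ • (k * Ep * kᵀ)).map (algebraMap (ZMod p) L)
      + rt • ((k * Ep * hᵀ - h * Ep * kᵀ).map (algebraMap (ZMod p) L)) = (lam • Ep).map (algebraMap (ZMod p) L) := by
    rw [huni, map_smul'']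
  have hmain : h * Ep * hᵀ + Δ • (k * Ep * kᵀ) = lam • Ep := by
    ext i j
    have hz := congrFun (congrFun huni' i) j
    simp only [Matrix.add_apply, Matrix.smul_apply, Matrix.map_apply, smul_eq_mul] at hz
    exact (hkey _ _ _ hz).2
  -- step 3 : substitute k = h * s₂ * Ep
  have hEp2 : ∀ X : Matrix (Fin a ⊕ Fin b) (Fin a ⊕ Fin b) (ZMod p),
      Ep * (Ep * X) = X := by
    intro X; rw [← mul_assoc, hEpE, one_mul]
  have hsub : k * Ep * kᵀ = h * (s₂ * Ep * s₂) * hᵀ := by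
    rw [hk]
    simp only [Matrix.transpose_mul, hEpT, hs₂.eq]
    simp [mul_assoc, hEp2]
  rw [hsub] at hmain
  have hfinal : (h * (Ep + Δ • (s₂ * Ep * s₂)) * hᵀ) = lam • Ep := by
    rw [← hmain]
    simp only [mul_add, add_mul, mul_smul_comm, smul_mul_assoc]
  -- determinants
  have hEdet : Ep.det = (-1 : ZMod p) ^ b := by
    simp [hEpdef, Matrix.det_fromBlocks_zero₂₁, Matrix.det_neg]
  have hdet := congrArg Matrix.det hfinal
  rw [Matrix.det_mul, Matrix.det_mul, hsing, Matrix.det_smul, hEdet] at hdet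
  simp only [mul_zero, zero_mul] at hdet
  exact absurd hdet.symm
    (mul_ne_zero (pow_ne_zero _ hlam)
      (pow_ne_zero _ (neg_ne_zero.mpr one_ne_zero)))
end
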